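/- If U₁ and U₂ are 2×2 unitaries with either [U₁,U₂] = 0 or {U₁,U₂} = 0, then the quantum-SWITCH output state (1/2)(|0⟩_c ⊗ {U₁,U₂}|ψ⟩ + |1⟩_c ⊗ [U₁,U₂]|ψ⟩) for a unit vector |ψ⟩ is a unit vector; measuring the control qubit yields outcome 0 with probability 1 in the commuting case and outcome 1 with probability 1 in the anti-commuting case. -/

import Mathlib

open Matrix Kronecker

noncomputable section

def X : Matrix (Fin 2) (Fin 2) ℂ := !![0, 1; 1, 0]
def Z : Matrix (Fin 2) (Fin 2) ℂ := !![1, 0; 0, -1]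
def D (f : Fin 2 → Fin 2) : Matrix (Fin 2) (Fin 2) ℂ :=
  Matrix.diagonal fun x => (-1 : ℂ) ^ (f x : ℕ)
def e (y : Fin 2) : Fin 2 → ℂ := Pi.single y 1
def e2 (p : Fin 2 × Fin 2) : Fin 2 × Fin 2 → ℂ := Pi.single p 1
def H2 : Matrix (Fin 2) (Fin 2) ℂ := (Real.sqrt 2 : ℂ)⁻¹ • !![1, 1; 1, -1]
/-- The oracle `U_f : |x⟩|y⟩ ↦ |x⟩|y ⊕ f(x)⟩`. -/
def Uf (f : Fin 2 → Fin 2) : Matrix (Fin 2 × Fin 2) (Fin 2 × Fin 2) ℂ :=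
  Matrix.of fun p q => if p.1 = q.1 ∧ p.2 = q.2 + f q.1 then 1 else 0
/-- Tensor product of a control vector and a target vector. -/
def tens (c t : Fin 2 → ℂ) : Fin 2 × Fin 2 → ℂ := fun p => c p.1 * t p.2

/-!
If `U₁` and `U₂` commute (anti-commute), the commutator (anti-commutator) vanishes and the other
term equals `2 U₁ U₂`, so the SWITCH output is `|0⟩_c ⊗ U₁U₂ψ` (`|1⟩_c ⊗ U₁U₂ψ`). Since `U₁U₂` is
unitary, this is a unit vector supported entirely on the corresponding control value.
-/

section UnitaryNorm

variable {𝕜 n : Type*} [RCLike 𝕜] [Fintype n]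

theorem sum_norm_sq_eq_re_star_dotProduct (v : n → 𝕜) :
    ∑ i, ‖v i‖ ^ 2 = RCLike.re (star v ⬝ᵥ v) := by
  simp only [dotProduct, Pi.star_apply, RCLike.star_def, RCLike.conj_mul, map_sum,
    ← RCLike.ofReal_pow, RCLike.ofReal_re]

theorem star_mulVec_dotProduct_mulVec_of_mem_unitaryGroup [DecidableEq n] {U : Matrix n n 𝕜}
    (hU : U ∈ unitaryGroup n 𝕜) (v : n → 𝕜) : star (U *ᵥ v) ⬝ᵥ (U *ᵥ v) = star v ⬝ᵥ v := by
  rw [star_mulVec, dotProduct_mulVec, vecMul_vecMul, ← star_eq_conjTranspose,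
    (mem_unitaryGroup_iff').1 hU, vecMul_one]

theorem sum_norm_sq_mulVec_of_mem_unitaryGroup [DecidableEq n] {U : Matrix n n 𝕜}
    (hU : U ∈ unitaryGroup n 𝕜) (v : n → 𝕜) : ∑ i, ‖(U *ᵥ v) i‖ ^ 2 = ∑ i, ‖v i‖ ^ 2 := by
  rw [sum_norm_sq_eq_re_star_dotProduct, sum_norm_sq_eq_re_star_dotProduct,
    star_mulVec_dotProduct_mulVec_of_mem_unitaryGroup hU]

end UnitaryNorm

theorem sum_norm_sq_tens (c t : Fin 2 → ℂ) :
    ∑ p, ‖tens c t p‖ ^ 2 = (∑ i, ‖c i‖ ^ 2) * ∑ j, ‖t j‖ ^ 2 := by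
  simp only [tens, Fintype.sum_prod_type, Finset.sum_mul_sum, norm_mul, mul_pow]

theorem sum_norm_sq_e (x : Fin 2) : ∑ i, ‖e x i‖ ^ 2 = 1 := by
  simp [e, Pi.single_apply, apply_ite (fun z : ℂ => ‖z‖ ^ 2)]

theorem tens_e_self (x y : Fin 2) (t : Fin 2 → ℂ) : tens (e x) t (x, y) = t y := by
  simp [tens, e]

theorem smul_tens (a : ℂ) (c t : Fin 2 → ℂ) : a • tens c t = tens c (a • t) := by
  ext p; simp only [tens, Pi.smul_apply, smul_eq_mul]; ring

theorem tens_zero_right (c : Fin 2 → ℂ) : tens c 0 = 0 := by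
  ext p; simp [tens]

theorem sum_norm_sq_tens_e_eq_one {t : Fin 2 → ℂ} (ht : ∑ j, ‖t j‖ ^ 2 = 1)
    (x : Fin 2) :
    (∑ p, ‖tens (e x) t p‖ ^ 2 = 1) ∧ ∑ y, ‖tens (e x) t (x, y)‖ ^ 2 = 1 := by
  simp only [sum_norm_sq_tens, sum_norm_sq_e, tens_e_self, one_mul, ht, and_self]

section Switch

variable {A B : Matrix (Fin 2) (Fin 2) ℂ} (ψ : Fin 2 → ℂ)

theorem switch_output_of_commute (h : A * B = B * A) :
    (1 / 2 : ℂ) • (tens (e 0) ((A * B + B * A) *ᵥ ψ) + tens (e 1) ((A * B - B * A) *ᵥ ψ)) =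
      tens (e 0) ((A * B) *ᵥ ψ) := by
  rw [← h, sub_self, zero_mulVec, tens_zero_right, add_zero, smul_tens, ← smul_mulVec]
  congr 2
  module

theorem switch_output_of_anticommute (h : A * B = -(B * A)) :
    (1 / 2 : ℂ) • (tens (e 0) ((A * B + B * A) *ᵥ ψ) + tens (e 1) ((A * B - B * A) *ᵥ ψ)) =
      tens (e 1) ((A * B) *ᵥ ψ) := by
  rw [h, neg_add_cancel, zero_mulVec, tens_zero_right, zero_add, smul_tens, ← smul_mulVec]
  congr 2
  module

end Switch

/-- for unitary `U₁, U₂` which commute or anti-commute and a unit vector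
`ψ`, the SWITCH output `(1/2)(|0⟩_c⊗{U₁,U₂}ψ + |1⟩_c⊗[U₁,U₂]ψ)` is a unit vector, and the
control-qubit measurement gives outcome 0 (resp. 1) with probability 1 in the commuting
(resp. anti-commuting) case. -/
theorem stmt12 (U₁ U₂ : Matrix (Fin 2) (Fin 2) ℂ)
    (h₁ : U₁ ∈ Matrix.unitaryGroup (Fin 2) ℂ) (h₂ : U₂ ∈ Matrix.unitaryGroup (Fin 2) ℂ)
    (ψ : Fin 2 → ℂ) (hψ : ∑ i, ‖ψ i‖ ^ 2 = 1) :
    let out : Fin 2 × Fin 2 → ℂ := (1 / 2 : ℂ) •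
      (tens (e 0) ((U₁ * U₂ + U₂ * U₁).mulVec ψ) +
        tens (e 1) ((U₁ * U₂ - U₂ * U₁).mulVec ψ))
    (U₁ * U₂ = U₂ * U₁ →
      (∑ p : Fin 2 × Fin 2, ‖out p‖ ^ 2 = 1) ∧ ∑ y : Fin 2, ‖out (0, y)‖ ^ 2 = 1) ∧
    (U₁ * U₂ = -(U₂ * U₁) →
      (∑ p : Fin 2 × Fin 2, ‖out p‖ ^ 2 = 1) ∧ ∑ y : Fin 2, ‖out (1, y)‖ ^ 2 = 1) := by
  have hunit : ∑ i, ‖((U₁ * U₂) *ᵥ ψ) i‖ ^ 2 = 1 := by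
    rw [sum_norm_sq_mulVec_of_mem_unitaryGroup (mul_mem h₁ h₂), hψ]
  refine ⟨fun h => ?_, fun h => ?_⟩
  · simpa only [switch_output_of_commute ψ h] using sum_norm_sq_tens_e_eq_one hunit 0
  · simpa only [switch_output_of_anticommute ψ h] using sum_norm_sq_tens_e_eq_one hunit 1
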